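/- The image of any nonconstant continuous polynomial map f : ℝ_{≥0}^N → ℝ is an unbounded interval: f(ℝ_{≥0}^N) is a convex subset of ℝ that is not bounded. -/

import Mathlib

/-!
The range of a continuous map on the connected space `ℝ_{≥0}^N` is connected, hence an interval.
A bounded polynomial map is constant, by induction on the degree: each difference map
`t ↦ f (s + t) - f t` is a bounded polynomial map of lower degree, hence a constant `c`, and
then `f` takes the values `f t + n • c` along `t, s + t, s + (s + t), …`, which forces `c = 0`.
-/

namespace PaperPoly

/-- `ADegLE d f` means that `f : S → G`, from an additive commutative semigroup to an
additive commutative group, is a polynomial map of degree at most `d ∈ ℕ`: the base case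
`ADegLE 0 f` means `f` is constant, and `ADegLE (d+1) f` means that for every `s : S` the
difference map `D_s f : t ↦ f (s+t) - f t` satisfies `ADegLE d`. -/
def ADegLE {S : Type*} [AddCommSemigroup S] {G : Type*} [AddCommGroup G] :
    ℕ → (S → G) → Prop
  | 0 => fun f => ∀ t t' : S, f t = f t'
  | d + 1 => fun f => ∀ s : S, ADegLE d (fun t => f (s + t) - f t)

section Bounded

open Bornology Set

variable {S : Type*} [AddCommSemigroup S]

lemma isBounded_range_add_sub {E : Type*} [SeminormedAddCommGroup E] {f : S → E}
    (hf : IsBounded (range f)) (s : S) : IsBounded (range fun t => f (s + t) - f t) :=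
  (hf.sub hf).subset <| range_subset_iff.2 fun _ =>
    sub_mem_sub (mem_range_self _) (mem_range_self _)

lemma apply_iterate_add {G : Type*} [AddCommGroup G] {f : S → G} {s : S} {c : G}
    (hc : ∀ t, f (s + t) - f t = c) (t : S) (n : ℕ) : f ((s + ·)^[n] t) = f t + n • c := by
  induction n with
  | zero => simp
  | succ n ih =>
    rw [Function.iterate_succ_apply', ← sub_add_cancel (f (s + _)) (f _), hc, ih, succ_nsmul]
    abel

variable {E : Type*} [NormedAddCommGroup E] [NormedSpace ℝ E]

lemma eq_zero_of_add_sub_eq_of_isBounded_range {f : S → E} (hf : IsBounded (range f)) {s : S}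
    {c : E} (hc : ∀ t, f (s + t) - f t = c) (t : S) : c = 0 := by
  obtain ⟨C, hC⟩ := isBounded_iff_forall_norm_le.1 (hf.sub hf)
  have hmul : ∀ n : ℕ, n * ‖c‖ ≤ C := fun n => by
    rw [← nsmul_eq_mul, ← RCLike.norm_nsmul ℝ, ← add_sub_cancel_left (f t) (n • c),
      ← apply_iterate_add hc]
    exact hC _ (sub_mem_sub (mem_range_self _) (mem_range_self _))
  by_contra hne
  obtain ⟨n, hn⟩ := exists_nat_gt (C / ‖c‖)
  exact (hmul n).not_gt ((div_lt_iff₀ (norm_pos_iff.2 hne)).1 hn)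

theorem ADegLE.apply_eq_of_isBounded_range {d : ℕ} {f : S → E} (hd : ADegLE d f)
    (hf : IsBounded (range f)) (t t' : S) : f t = f t' := by
  induction d generalizing f t t' with
  | zero => exact hd t t'
  | succ d ih =>
    have hinv : ∀ s u, f (s + u) = f u := fun s u =>
      sub_eq_zero.1 <| eq_zero_of_add_sub_eq_of_isBounded_range hf
        (fun v => ih (hd s) (isBounded_range_add_sub hf s) v u) u
    rw [← hinv t' t, add_comm, hinv]

end Bounded

/-- The image of any nonconstant continuous polynomial map `f : ℝ_{≥0}^N → ℝ` is an
unbounded interval: the range of `f` is a convex subset of `ℝ` which is not bounded. -/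
theorem image_of_continuous_polynomial_map (N : ℕ) (f : (Fin N → NNReal) → ℝ)
    (hf : ∃ d : ℕ, ADegLE d f) (hcont : Continuous f)
    (hnonconst : ∃ t t' : Fin N → NNReal, f t ≠ f t') :
    Convex ℝ (Set.range f) ∧ ¬ Bornology.IsBounded (Set.range f) := by
  refine ⟨Real.convex_iff_isPreconnected.2 (isPreconnected_range hcont), fun hbdd => ?_⟩
  obtain ⟨d, hd⟩ := hf
  obtain ⟨t, t', hne⟩ := hnonconst
  exact hne (hd.apply_eq_of_isBounded_range hbdd t t')

end PaperPoly
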